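/- arXiv:2312.10446 — 3 statements merged into one kernel-verified Lean document; each statement's English description precedes it below -/
import Mathlib

section
/- Let E₁ and E₀ be separable real Hilbert spaces and ι : E₁ → E₀ an injective continuous linear map with dense range. Define the extended E₁-norm N : E₀ → [0,∞] by N(x) = ‖y‖_{E₁} if x = ι(y) for the (unique) y ∈ E₁, and N(x) = ∞ if x does not lie in the range of ι. Then N is lower semicontinuous with respect to the norm topology of E₀; in particular, N is Borel measurable on E₀. -/
/-!
The sublevel set `{N ≤ r}` is the image under `ι` of the closed ball of radius `r` in `E₁`.
By the Riesz representation and Banach–Alaoglu, that ball is weakly compact; `ι` is weakly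
continuous (its transpose is `ι†`), so the image is weakly compact in `E₀`, hence weakly closed
and a fortiori norm closed.
-/

open scoped ENNReal
open Metric InnerProductSpace

theorem preimage_Iic_coe_eq_image_closedBall {E F : Type*} [SeminormedAddCommGroup E]
    {f : E → F} {N : F → ℝ≥0∞} (hN₁ : ∀ y, N (f y) = ‖y‖₊)
    (hN₂ : ∀ x ∉ Set.range f, N x = ∞) (r : NNReal) :
    N ⁻¹' Set.Iic (r : ℝ≥0∞) = f '' closedBall 0 r := by
  ext x
  constructor
  · intro hx
    obtain ⟨y, rfl⟩ : x ∈ Set.range f := by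
      by_contra h
      simp [hN₂ x h] at hx
    refine ⟨y, ?_, rfl⟩
    simpa [hN₁, ← NNReal.coe_le_coe] using hx
  · rintro ⟨y, hy, rfl⟩
    simpa [hN₁, ← NNReal.coe_le_coe] using hy

namespace ContinuousLinearMap

variable {𝕜 E F : Type*} [RCLike 𝕜]
  [NormedAddCommGroup E] [InnerProductSpace 𝕜 E] [CompleteSpace E]
  [NormedAddCommGroup F] [InnerProductSpace 𝕜 F] [CompleteSpace F]

theorem isClosed_image_closedBall (T : E →L[𝕜] F) (c : E) (r : ℝ) :
    IsClosed (T '' closedBall c r) := by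
  -- `F → 𝕜` with the product topology stands in for the weak topology of `F`.
  set pairing : F → F → 𝕜 := fun x w => inner 𝕜 x w
  set transpose : WeakDual 𝕜 E → F → 𝕜 := fun φ w => φ (adjoint T w)
  have pairing_injective : Function.Injective pairing := fun x x' h =>
    ext_inner_right 𝕜 (congrFun h)
  have transpose_toDual (y : E) :
      transpose (WeakDual.toStrongDual.symm (toDual 𝕜 E y)) = pairing (T y) := by
    funext w
    simp [transpose, pairing, adjoint_inner_right]
  have image_ball_eq : transpose '' (WeakDual.toStrongDual ⁻¹' closedBall (toDual 𝕜 E c) r) =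
      pairing '' (T '' closedBall c r) := by
    rw [← LinearIsometryEquiv.image_closedBall, ← WeakDual.toStrongDual.image_symm_eq_preimage]
    simp only [Set.image_image, transpose_toDual]
  have image_ball_compact :
      IsCompact (transpose '' (WeakDual.toStrongDual ⁻¹' closedBall (toDual 𝕜 E c) r)) :=
    (WeakDual.isCompact_closedBall _ r).image
      (continuous_pi fun w => WeakDual.eval_continuous _)
  rw [← pairing_injective.preimage_image (T '' closedBall c r), ← image_ball_eq]
  exact image_ball_compact.isClosed.preimage
    (continuous_pi fun w => continuous_id.inner continuous_const)

theorem lowerSemicontinuous_of_apply_eq_nnnorm {T : E →L[𝕜] F} {N : F → ℝ≥0∞}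
    (hN₁ : ∀ y, N (T y) = ‖y‖₊) (hN₂ : ∀ x ∉ Set.range T, N x = ∞) :
    LowerSemicontinuous N := by
  refine lowerSemicontinuous_iff_isClosed_preimage.mpr fun c => ?_
  induction c using ENNReal.recTopCoe with
  | top => simp
  | coe r =>
    rw [preimage_Iic_coe_eq_image_closedBall hN₁ hN₂]
    exact T.isClosed_image_closedBall 0 r

end ContinuousLinearMap

theorem stmt_0_general
    {E₁ E₀ : Type*}
    [NormedAddCommGroup E₁] [InnerProductSpace ℝ E₁] [CompleteSpace E₁]
    [NormedAddCommGroup E₀] [InnerProductSpace ℝ E₀] [CompleteSpace E₀]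
    [MeasurableSpace E₀] [BorelSpace E₀]
    (ι : E₁ →L[ℝ] E₀)
    (N : E₀ → ℝ≥0∞)
    (hN₁ : ∀ y : E₁, N (ι y) = (‖y‖₊ : ℝ≥0∞))
    (hN₂ : ∀ x : E₀, x ∉ Set.range ι → N x = ∞) :
    LowerSemicontinuous N ∧ Measurable N := by
  have hlsc : LowerSemicontinuous N := ι.lowerSemicontinuous_of_apply_eq_nnnorm hN₁ hN₂
  exact ⟨hlsc, hlsc.measurable⟩

/-- Let `E₁`, `E₀` be separable real Hilbert spaces and `ι : E₁ → E₀`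
an injective continuous linear map with dense range. The extended `E₁`-norm
`N : E₀ → [0,∞]` (equal to `‖y‖` if `x = ι y` and `∞` off the range of `ι`) is
lower semicontinuous on `E₀`, and in particular Borel measurable. -/
theorem stmt_0
    {E₁ E₀ : Type*}
    [NormedAddCommGroup E₁] [InnerProductSpace ℝ E₁] [CompleteSpace E₁]
    [TopologicalSpace.SeparableSpace E₁]
    [NormedAddCommGroup E₀] [InnerProductSpace ℝ E₀] [CompleteSpace E₀]
    [TopologicalSpace.SeparableSpace E₀]
    [MeasurableSpace E₀] [BorelSpace E₀]
    (ι : E₁ →L[ℝ] E₀) (hι : Function.Injective ι) (hdense : DenseRange ι)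
    (N : E₀ → ℝ≥0∞)
    (hN₁ : ∀ y : E₁, N (ι y) = (‖y‖₊ : ℝ≥0∞))
    (hN₂ : ∀ x : E₀, x ∉ Set.range ι → N x = ∞) :
    LowerSemicontinuous N ∧ Measurable N :=
  stmt_0_general ι N hN₁ hN₂
end

section
/- Let H be a real Hilbert space, w ∈ H, and c, α, η real numbers. Define the vector field S on H∖{0} by S(z) = c‖z‖^η ( w − α‖z‖^{-2}⟨z,w⟩ z ). Then S is Fréchet differentiable at every x ≠ 0, and DS(x)[S(x)] = c²(η − α − ηα)‖x‖^{2η−2}⟨x,w⟩ · w + c²‖x‖^{2η−2}( (α²η − α(η−2))‖x‖^{-2}⟨x,w⟩² − α‖w‖² ) · x. -/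
open scoped InnerProductSpace

/-- The vector field `S z = c ‖z‖^η (w − α ‖z‖⁻² ⟨z,w⟩ z)` on a real Hilbert space. -/
noncomputable def stmt7S {H : Type*} [NormedAddCommGroup H] [InnerProductSpace ℝ H]
    (w : H) (c α η : ℝ) (z : H) : H :=
  (c * ‖z‖ ^ η) • (w - (α * ‖z‖ ^ (-2 : ℝ) * ⟪z, w⟫_ℝ) • z)

lemma aux_norm_rpow {H : Type*} [NormedAddCommGroup H] [InnerProductSpace ℝ H]
    (η : ℝ) (x : H) (hx : x ≠ 0) :
    HasFDerivAt (fun z : H => ‖z‖ ^ η) ((η * ‖x‖ ^ (η - 2)) • innerSL ℝ x) x := by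
  have ht : (0:ℝ) < ‖x‖ := norm_pos_iff.2 hx
  have h2 : HasFDerivAt (fun z : H => ‖z‖ ^ 2) (2 • innerSL ℝ x) x :=
    (hasStrictFDerivAt_norm_sq x).hasFDerivAt
  have h := h2.rpow_const (p := η / 2) (Or.inl (by positivity))
  have hfun : (fun z : H => (‖z‖ ^ 2) ^ (η / 2)) = fun z : H => ‖z‖ ^ η := by
    funext z
    rw [← Real.rpow_natCast ‖z‖ 2, ← Real.rpow_mul (norm_nonneg z)]
    congr 1
    push_cast; ring
  rw [hfun] at h
  have key : ((‖x‖ ^ 2 : ℝ)) ^ (η / 2 - 1) = ‖x‖ ^ (η - 2) := by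
    rw [← Real.rpow_natCast ‖x‖ 2, ← Real.rpow_mul (norm_nonneg x)]
    congr 1
    push_cast; ring
  convert h using 1
  ext v
  simp [key]
  ring

/-- `S` is Fréchet differentiable at every `x ≠ 0` and
`DS(x)[S(x)] = c²(η − α − ηα)‖x‖^{2η−2}⟨x,w⟩ w
  + c²‖x‖^{2η−2}((α²η − α(η−2))‖x‖⁻²⟨x,w⟩² − α‖w‖²) x`. -/
theorem stmt_7
    {H : Type*} [NormedAddCommGroup H] [InnerProductSpace ℝ H] [CompleteSpace H]
    (w : H) (c α η : ℝ) (x : H) (hx : x ≠ 0) :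
    ∃ D : H →L[ℝ] H, HasFDerivAt (stmt7S w c α η) D x ∧
      D (stmt7S w c α η x) =
        (c ^ 2 * (η - α - η * α) * ‖x‖ ^ (2 * η - 2) * ⟪x, w⟫_ℝ) • w +
          (c ^ 2 * ‖x‖ ^ (2 * η - 2) *
            ((α ^ 2 * η - α * (η - 2)) * ‖x‖ ^ (-2 : ℝ) * ⟪x, w⟫_ℝ ^ 2 -
              α * ‖w‖ ^ 2)) • x := by
  have ht : (0:ℝ) < ‖x‖ := norm_pos_iff.2 hx
  -- the nicer form of S near x
  set F : H → H := fun z => (c * ‖z‖ ^ η) • w - (c * α * (‖z‖ ^ (η - 2) * ⟪w, z⟫_ℝ)) • z with hF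
  have hSF : stmt7S w c α η =ᶠ[nhds x] F := by
    filter_upwards [IsOpen.mem_nhds isOpen_compl_singleton hx] with z hz
    have htz : (0:ℝ) < ‖z‖ := norm_pos_iff.2 hz
    have e : ‖z‖ ^ (η - 2) = ‖z‖ ^ η * ‖z‖ ^ (-2:ℝ) := by
      rw [← Real.rpow_add htz]; ring_nf
    simp only [stmt7S, hF, smul_sub, smul_smul, e]
    congr 2
    rw [real_inner_comm]
    ring
  -- derivative of F
  have hf : HasFDerivAt (fun z : H => c * ‖z‖ ^ η)
      (c • ((η * ‖x‖ ^ (η - 2)) • innerSL ℝ x)) x :=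
    (aux_norm_rpow η x hx).const_mul c
  have hg0 : HasFDerivAt (fun z : H => ‖z‖ ^ (η - 2) * ⟪w, z⟫_ℝ)
      (‖x‖ ^ (η - 2) • (innerSL ℝ w) + ⟪w, x⟫_ℝ • ((η - 2) * ‖x‖ ^ (η - 2 - 2)) • innerSL ℝ x) x :=
    (aux_norm_rpow (η - 2) x hx).mul ((innerSL ℝ w).hasFDerivAt)
  have hg : HasFDerivAt (fun z : H => c * α * (‖z‖ ^ (η - 2) * ⟪w, z⟫_ℝ))
      ((c * α) • (‖x‖ ^ (η - 2) • (innerSL ℝ w) + ⟪w, x⟫_ℝ • ((η - 2) * ‖x‖ ^ (η - 2 - 2)) • innerSL ℝ x)) x :=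
    hg0.const_mul (c * α)
  have hD := (hf.smul (hasFDerivAt_const w x)).sub (hg.smul (hasFDerivAt_id x))
  refine ⟨_, hD.congr_of_eventuallyEq hSF, ?_⟩
  have hSx : stmt7S w c α η x = F x := hSF.self_of_nhds
  rw [hSx]
  -- now unfold the application
  have hn2 : (‖x‖:ℝ) ^ 2 ≠ 0 := by positivity
  have e0 : ‖x‖ ^ (-2:ℝ) = (‖x‖ ^ 2)⁻¹ := by
    rw [← Real.rpow_natCast ‖x‖ 2, ← Real.rpow_neg_one, ← Real.rpow_mul (norm_nonneg x)]
    norm_num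
  have e1 : ‖x‖ ^ (η - 2) = ‖x‖ ^ η / ‖x‖ ^ 2 := by
    rw [eq_div_iff hn2, ← Real.rpow_natCast ‖x‖ 2, ← Real.rpow_add ht]
    norm_num
  have e2 : ‖x‖ ^ (η - 2 - 2) = ‖x‖ ^ η / ‖x‖ ^ (4:ℕ) := by
    rw [eq_div_iff (by positivity), ← Real.rpow_natCast ‖x‖ 4, ← Real.rpow_add ht]
    congr 1
    push_cast; ring
  have e3 : ‖x‖ ^ (2 * η - 2) = ‖x‖ ^ η * ‖x‖ ^ η / ‖x‖ ^ 2 := by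
    rw [eq_div_iff hn2, ← Real.rpow_natCast ‖x‖ 2, ← Real.rpow_add ht, ← Real.rpow_add ht]
    ring_nf
  simp only [hF, ContinuousLinearMap.sub_apply, ContinuousLinearMap.add_apply,
    ContinuousLinearMap.smul_apply, ContinuousLinearMap.smulRight_apply,
    ContinuousLinearMap.coe_smul', Pi.smul_apply, ContinuousLinearMap.id_apply,
    innerSL_apply_apply, inner_sub_right, inner_smul_right, real_inner_self_eq_norm_sq,
    smul_eq_mul, real_inner_comm w x, ContinuousLinearMap.zero_apply, smul_zero,
    zero_add, id_eq]
  rw [e0, e1, e2, e3]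
  match_scalars <;> field_simp <;> ring
end

section
/- For x ∈ E₁ with ι(x) ≠ 0, set α_k(x) := c²λ_k(η − α − ηα)‖ιx‖₀^{2η−2}⟨ιx, ιw_k⟩₀ and β_k(x) := c²λ_k‖ιx‖₀^{2η−2}( (α²η − α(η−2))·‖ιx‖₀^{-2}⟨ιx, ιw_k⟩₀² − α‖ιw_k‖₀² ). Then the series ∑_{k≥1} ( α_k(x)·w_k + β_k(x)·x ) converges absolutely in E₁, and ⟨ x, ∑_{k≥1} ( α_k(x)·w_k + β_k(x)·x ) ⟩₁ ≤ c²M²K·( |η − α − ηα| + |α²η − α(η−2)| + |α| )·‖ιx‖₀^{2η−2}·‖x‖₁². -/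
open scoped InnerProductSpace

/-- With `ι : E₁ → E₀` continuous linear, `‖ι y‖₀ ≤ M ‖y‖₁`,
`K = ∑_k λ_k ‖w_k‖₁² < ∞`, and, for `x ∈ E₁` with `ι x ≠ 0`,
`α_k(x) = c²λ_k(η − α − ηα)‖ιx‖₀^{2η−2}⟨ιx, ιw_k⟩₀` and
`β_k(x) = c²λ_k‖ιx‖₀^{2η−2}((α²η − α(η−2))‖ιx‖₀⁻²⟨ιx, ιw_k⟩₀² − α‖ιw_k‖₀²)`,
the series `∑_k (α_k(x) w_k + β_k(x) x)` converges absolutely in `E₁` and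
`⟨x, ∑_k (α_k(x) w_k + β_k(x) x)⟩₁
  ≤ c²M²K(|η−α−ηα| + |α²η−α(η−2)| + |α|)‖ιx‖₀^{2η−2}‖x‖₁²`. -/
theorem stmt_10
    {E₁ E₀ : Type*}
    [NormedAddCommGroup E₁] [InnerProductSpace ℝ E₁] [CompleteSpace E₁]
    [NormedAddCommGroup E₀] [InnerProductSpace ℝ E₀] [CompleteSpace E₀]
    (ι : E₁ →L[ℝ] E₀) (M : ℝ) (hM : 0 < M) (hιM : ∀ y : E₁, ‖ι y‖ ≤ M * ‖y‖)
    (lam : ℕ → ℝ) (hlam : ∀ k, 0 ≤ lam k)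
    (w : ℕ → E₁) (hK : Summable fun k => lam k * ‖w k‖ ^ 2)
    (c α η : ℝ)
    (x : E₁) (hx : ι x ≠ 0) :
    (Summable fun k =>
      ‖(c ^ 2 * lam k * (η - α - η * α) * ‖ι x‖ ^ (2 * η - 2) * ⟪ι x, ι (w k)⟫_ℝ) • w k +
        (c ^ 2 * lam k * ‖ι x‖ ^ (2 * η - 2) *
          ((α ^ 2 * η - α * (η - 2)) * ‖ι x‖ ^ (-2 : ℝ) * ⟪ι x, ι (w k)⟫_ℝ ^ 2 -
            α * ‖ι (w k)‖ ^ 2)) • x‖) ∧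
    ⟪x, ∑' k,
        ((c ^ 2 * lam k * (η - α - η * α) * ‖ι x‖ ^ (2 * η - 2) * ⟪ι x, ι (w k)⟫_ℝ) • w k +
          (c ^ 2 * lam k * ‖ι x‖ ^ (2 * η - 2) *
            ((α ^ 2 * η - α * (η - 2)) * ‖ι x‖ ^ (-2 : ℝ) * ⟪ι x, ι (w k)⟫_ℝ ^ 2 -
              α * ‖ι (w k)‖ ^ 2)) • x)⟫_ℝ ≤
      c ^ 2 * M ^ 2 * (∑' k, lam k * ‖w k‖ ^ 2) *
        (|η - α - η * α| + |α ^ 2 * η - α * (η - 2)| + |α|) *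
          ‖ι x‖ ^ (2 * η - 2) * ‖x‖ ^ 2 := by
  have hx0 : (0:ℝ) < ‖ι x‖ := norm_pos_iff.mpr hx
  set A : ℝ := ‖ι x‖ ^ (2 * η - 2 : ℝ) with hA_def
  have hA : 0 < A := Real.rpow_pos_of_pos hx0 _
  set s₁ : ℝ := η - α - η * α with hs₁
  set s₂ : ℝ := α ^ 2 * η - α * (η - 2) with hs₂
  set f : ℕ → E₁ := fun k =>
      (c ^ 2 * lam k * s₁ * A * ⟪ι x, ι (w k)⟫_ℝ) • w k +
        (c ^ 2 * lam k * A *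
          (s₂ * ‖ι x‖ ^ (-2 : ℝ) * ⟪ι x, ι (w k)⟫_ℝ ^ 2 - α * ‖ι (w k)‖ ^ 2)) • x
    with hf_def
  -- basic scalar bounds
  have hP : ∀ k, |⟪ι x, ι (w k)⟫_ℝ| ≤ ‖ι x‖ * (M * ‖w k‖) := fun k =>
    (abs_real_inner_le_norm _ _).trans
      (mul_le_mul_of_nonneg_left (hιM _) (norm_nonneg _))
  have hinv : ‖ι x‖ ^ (-2 : ℝ) = (‖ι x‖ ^ 2)⁻¹ := by
    rw [Real.rpow_neg hx0.le]
    norm_num [Real.rpow_natCast]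
  have hP2 : ∀ k, ‖ι x‖ ^ (-2 : ℝ) * ⟪ι x, ι (w k)⟫_ℝ ^ 2 ≤ (M * ‖w k‖) ^ 2 := by
    intro k
    have h1 : ⟪ι x, ι (w k)⟫_ℝ ^ 2 ≤ (‖ι x‖ * (M * ‖w k‖)) ^ 2 := by
      rw [← sq_abs]
      exact pow_le_pow_left₀ (abs_nonneg _) (hP k) 2
    rw [hinv]
    calc (‖ι x‖ ^ 2)⁻¹ * ⟪ι x, ι (w k)⟫_ℝ ^ 2
        ≤ (‖ι x‖ ^ 2)⁻¹ * (‖ι x‖ * (M * ‖w k‖)) ^ 2 := by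
          exact mul_le_mul_of_nonneg_left h1 (by positivity)
      _ = (M * ‖w k‖) ^ 2 := by
          field_simp
  have hP2' : ∀ k, 0 ≤ ‖ι x‖ ^ (-2 : ℝ) * ⟪ι x, ι (w k)⟫_ℝ ^ 2 := by
    intro k; positivity
  have hιw : ∀ k, ‖ι (w k)‖ ^ 2 ≤ (M * ‖w k‖) ^ 2 := fun k =>
    pow_le_pow_left₀ (norm_nonneg _) (hιM _) 2
  -- bound on the second scalar coefficient
  have hb : ∀ k, |s₂ * ‖ι x‖ ^ (-2 : ℝ) * ⟪ι x, ι (w k)⟫_ℝ ^ 2 - α * ‖ι (w k)‖ ^ 2|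
      ≤ (|s₂| + |α|) * (M * ‖w k‖) ^ 2 := by
    intro k
    have h1 : |s₂ * ‖ι x‖ ^ (-2 : ℝ) * ⟪ι x, ι (w k)⟫_ℝ ^ 2|
        ≤ |s₂| * (M * ‖w k‖) ^ 2 := by
      rw [mul_assoc, abs_mul]
      exact mul_le_mul_of_nonneg_left
        (by rw [abs_of_nonneg (hP2' k)]; exact hP2 k) (abs_nonneg _)
    have h2 : |α * ‖ι (w k)‖ ^ 2| ≤ |α| * (M * ‖w k‖) ^ 2 := by
      rw [abs_mul, abs_of_nonneg (by positivity : (0:ℝ) ≤ ‖ι (w k)‖ ^ 2)]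
      exact mul_le_mul_of_nonneg_left (hιw k) (abs_nonneg _)
    calc |s₂ * ‖ι x‖ ^ (-2 : ℝ) * ⟪ι x, ι (w k)⟫_ℝ ^ 2 - α * ‖ι (w k)‖ ^ 2|
        ≤ |s₂ * ‖ι x‖ ^ (-2 : ℝ) * ⟪ι x, ι (w k)⟫_ℝ ^ 2| + |α * ‖ι (w k)‖ ^ 2| :=
          abs_sub _ _
      _ ≤ |s₂| * (M * ‖w k‖) ^ 2 + |α| * (M * ‖w k‖) ^ 2 := add_le_add h1 h2
      _ = (|s₂| + |α|) * (M * ‖w k‖) ^ 2 := by ring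
  -- norm bound on f k
  set D : ℝ := c ^ 2 * A * (|s₁| * (M * ‖ι x‖) + (|s₂| + |α|) * M ^ 2 * ‖x‖) with hD_def
  have hfb : ∀ k, ‖f k‖ ≤ D * (lam k * ‖w k‖ ^ 2) := by
    intro k
    have h0k : (0:ℝ) ≤ c ^ 2 * lam k := mul_nonneg (by positivity) (hlam k)
    have h1k : (0:ℝ) ≤ c ^ 2 * lam k * |s₁| * A :=
      mul_nonneg (mul_nonneg h0k (abs_nonneg _)) hA.le
    have h2k : (0:ℝ) ≤ c ^ 2 * lam k * A := mul_nonneg h0k hA.le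
    have h1 : ‖(c ^ 2 * lam k * s₁ * A * ⟪ι x, ι (w k)⟫_ℝ) • w k‖
        ≤ c ^ 2 * A * |s₁| * (M * ‖ι x‖) * (lam k * ‖w k‖ ^ 2) := by
      rw [norm_smul, Real.norm_eq_abs]
      have : |c ^ 2 * lam k * s₁ * A * ⟪ι x, ι (w k)⟫_ℝ|
          ≤ c ^ 2 * lam k * |s₁| * A * (‖ι x‖ * (M * ‖w k‖)) := by
        rw [abs_mul]
        have he : |c ^ 2 * lam k * s₁ * A| = c ^ 2 * lam k * |s₁| * A := by
          rw [abs_mul, abs_mul, abs_of_nonneg h0k,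
            abs_of_nonneg hA.le]
        rw [he]
        exact mul_le_mul_of_nonneg_left (hP k) h1k
      calc |c ^ 2 * lam k * s₁ * A * ⟪ι x, ι (w k)⟫_ℝ| * ‖w k‖
          ≤ c ^ 2 * lam k * |s₁| * A * (‖ι x‖ * (M * ‖w k‖)) * ‖w k‖ :=
            mul_le_mul_of_nonneg_right this (norm_nonneg _)
        _ = c ^ 2 * A * |s₁| * (M * ‖ι x‖) * (lam k * ‖w k‖ ^ 2) := by ring
    have h2 : ‖(c ^ 2 * lam k * A *
          (s₂ * ‖ι x‖ ^ (-2 : ℝ) * ⟪ι x, ι (w k)⟫_ℝ ^ 2 - α * ‖ι (w k)‖ ^ 2)) • x‖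
        ≤ c ^ 2 * A * ((|s₂| + |α|) * M ^ 2 * ‖x‖) * (lam k * ‖w k‖ ^ 2) := by
      rw [norm_smul, Real.norm_eq_abs, abs_mul, abs_of_nonneg h2k]
      calc c ^ 2 * lam k * A * |s₂ * ‖ι x‖ ^ (-2 : ℝ) * ⟪ι x, ι (w k)⟫_ℝ ^ 2
            - α * ‖ι (w k)‖ ^ 2| * ‖x‖
          ≤ c ^ 2 * lam k * A * ((|s₂| + |α|) * (M * ‖w k‖) ^ 2) * ‖x‖ := by
            exact mul_le_mul_of_nonneg_right
              (mul_le_mul_of_nonneg_left (hb k) h2k) (norm_nonneg _)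
        _ = c ^ 2 * A * ((|s₂| + |α|) * M ^ 2 * ‖x‖) * (lam k * ‖w k‖ ^ 2) := by ring
    calc ‖f k‖ ≤ _ + _ := norm_add_le _ _
      _ ≤ c ^ 2 * A * |s₁| * (M * ‖ι x‖) * (lam k * ‖w k‖ ^ 2)
          + c ^ 2 * A * ((|s₂| + |α|) * M ^ 2 * ‖x‖) * (lam k * ‖w k‖ ^ 2) :=
          add_le_add h1 h2
      _ = D * (lam k * ‖w k‖ ^ 2) := by rw [hD_def]; ring
  have hsum_norm : Summable fun k => ‖f k‖ :=
    Summable.of_nonneg_of_le (fun k => norm_nonneg _) hfb (hK.mul_left D)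
  refine ⟨hsum_norm, ?_⟩
  have hfsum : Summable f := hsum_norm.of_norm
  -- move inner product inside the sum
  have hmap : ⟪x, ∑' k, f k⟫_ℝ = ∑' k, ⟪x, f k⟫_ℝ := (innerSL ℝ x).map_tsum hfsum
  rw [hmap]
  set C : ℝ := c ^ 2 * M ^ 2 * (|s₁| + |s₂| + |α|) * A * ‖x‖ ^ 2 with hC_def
  have hterm : ∀ k, ⟪x, f k⟫_ℝ ≤ C * (lam k * ‖w k‖ ^ 2) := by
    intro k
    have h0k : (0:ℝ) ≤ c ^ 2 * lam k := mul_nonneg (by positivity) (hlam k)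
    have h1k : (0:ℝ) ≤ c ^ 2 * lam k * |s₁| * A :=
      mul_nonneg (mul_nonneg h0k (abs_nonneg _)) hA.le
    have h2k : (0:ℝ) ≤ c ^ 2 * lam k * A := mul_nonneg h0k hA.le
    have hval : ⟪x, f k⟫_ℝ
        = (c ^ 2 * lam k * s₁ * A * ⟪ι x, ι (w k)⟫_ℝ) * ⟪x, w k⟫_ℝ
          + (c ^ 2 * lam k * A *
            (s₂ * ‖ι x‖ ^ (-2 : ℝ) * ⟪ι x, ι (w k)⟫_ℝ ^ 2 - α * ‖ι (w k)‖ ^ 2)) * ‖x‖ ^ 2 := by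
      simp only [hf_def, inner_add_right, real_inner_smul_right,
        real_inner_self_eq_norm_sq]
    rw [hval]
    have hxw : |⟪x, w k⟫_ℝ| ≤ ‖x‖ * ‖w k‖ := abs_real_inner_le_norm _ _
    have hιxM : ‖ι x‖ ≤ M * ‖x‖ := hιM x
    have h1 : (c ^ 2 * lam k * s₁ * A * ⟪ι x, ι (w k)⟫_ℝ) * ⟪x, w k⟫_ℝ
        ≤ c ^ 2 * M ^ 2 * |s₁| * A * ‖x‖ ^ 2 * (lam k * ‖w k‖ ^ 2) := by
      calc (c ^ 2 * lam k * s₁ * A * ⟪ι x, ι (w k)⟫_ℝ) * ⟪x, w k⟫_ℝ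
          ≤ |(c ^ 2 * lam k * s₁ * A * ⟪ι x, ι (w k)⟫_ℝ) * ⟪x, w k⟫_ℝ| := le_abs_self _
        _ = c ^ 2 * lam k * |s₁| * A * |⟪ι x, ι (w k)⟫_ℝ| * |⟪x, w k⟫_ℝ| := by
            rw [abs_mul, abs_mul, abs_mul, abs_mul, abs_of_nonneg h0k,
              abs_of_nonneg hA.le]
        _ ≤ c ^ 2 * lam k * |s₁| * A * (‖ι x‖ * (M * ‖w k‖)) * (‖x‖ * ‖w k‖) := by
            have h3 := mul_le_mul_of_nonneg_left (hP k) h1k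
            exact mul_le_mul h3 hxw (abs_nonneg _)
              (mul_nonneg h1k (by positivity))
        _ ≤ c ^ 2 * lam k * |s₁| * A * ((M * ‖x‖) * (M * ‖w k‖)) * (‖x‖ * ‖w k‖) := by
            gcongr
        _ = c ^ 2 * M ^ 2 * |s₁| * A * ‖x‖ ^ 2 * (lam k * ‖w k‖ ^ 2) := by ring
    have h2 : (c ^ 2 * lam k * A *
          (s₂ * ‖ι x‖ ^ (-2 : ℝ) * ⟪ι x, ι (w k)⟫_ℝ ^ 2 - α * ‖ι (w k)‖ ^ 2)) * ‖x‖ ^ 2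
        ≤ c ^ 2 * M ^ 2 * (|s₂| + |α|) * A * ‖x‖ ^ 2 * (lam k * ‖w k‖ ^ 2) := by
      calc (c ^ 2 * lam k * A *
            (s₂ * ‖ι x‖ ^ (-2 : ℝ) * ⟪ι x, ι (w k)⟫_ℝ ^ 2 - α * ‖ι (w k)‖ ^ 2)) * ‖x‖ ^ 2
          ≤ (c ^ 2 * lam k * A * ((|s₂| + |α|) * (M * ‖w k‖) ^ 2)) * ‖x‖ ^ 2 := by
            have hle : s₂ * ‖ι x‖ ^ (-2 : ℝ) * ⟪ι x, ι (w k)⟫_ℝ ^ 2 - α * ‖ι (w k)‖ ^ 2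
                ≤ (|s₂| + |α|) * (M * ‖w k‖) ^ 2 := (le_abs_self _).trans (hb k)
            exact mul_le_mul_of_nonneg_right
              (mul_le_mul_of_nonneg_left hle h2k) (by positivity)
        _ = c ^ 2 * M ^ 2 * (|s₂| + |α|) * A * ‖x‖ ^ 2 * (lam k * ‖w k‖ ^ 2) := by ring
    calc _ ≤ c ^ 2 * M ^ 2 * |s₁| * A * ‖x‖ ^ 2 * (lam k * ‖w k‖ ^ 2)
          + c ^ 2 * M ^ 2 * (|s₂| + |α|) * A * ‖x‖ ^ 2 * (lam k * ‖w k‖ ^ 2) :=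
        add_le_add h1 h2
      _ = C * (lam k * ‖w k‖ ^ 2) := by rw [hC_def]; ring
  have hsum_inner : Summable fun k => ⟪x, f k⟫_ℝ :=
    Summable.of_norm (Summable.of_nonneg_of_le (fun k => norm_nonneg _)
      (fun k => by
        rw [Real.norm_eq_abs]
        exact (abs_real_inner_le_norm x (f k)).trans
          (mul_le_mul_of_nonneg_left (hfb k) (norm_nonneg x)))
      ((hK.mul_left D).mul_left ‖x‖))
  calc (∑' k, ⟪x, f k⟫_ℝ) ≤ ∑' k, C * (lam k * ‖w k‖ ^ 2) :=
        Summable.tsum_le_tsum hterm hsum_inner (hK.mul_left C)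
    _ = C * ∑' k, lam k * ‖w k‖ ^ 2 := tsum_mul_left
    _ = c ^ 2 * M ^ 2 * (∑' k, lam k * ‖w k‖ ^ 2) * (|s₁| + |s₂| + |α|) * A * ‖x‖ ^ 2 := by
        rw [hC_def]; ring
end
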